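/- In the ring F = ℂ[[x,y,z]]/((z−x)(z²−y), z²−y+2z(z−x)), the identity [z]·[3y + x²] = [4xy] holds, and [3y + x²] maps to a non-zerodivisor of E = ℂ[[x,y]]/(y(x²−y)²) under the inclusion E → F. -/

import Mathlib

/-!
`ℂ[[x,y]]` is a UFD, because `ℂ[[x]]` is a PID. A power series of order one is irreducible, since
a product of two non-units has order at least two. Hence `y`, `x² − y`
and `3y + x²` are prime. If `3y + x²` divided `y(x² − y)²` it would be associate to `y` or to
`x² − y`, and either forces `y ∣ x²`; so `3y + x²` is a non-zerodivisor modulo `y(x² − y)²`.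
In `F` the identity comes from
`2 (z(3y + x²) − 4xy) = −9 (z − x)(z² − y) + (3z − x)(z² − y + 2z(z − x))`.
-/

noncomputable section

/-- `ℂ[[x,y]]`. -/
abbrev R2 : Type := MvPowerSeries (Fin 2) ℂ
/-- `ℂ[[x,y,z]]`, realized as `ℂ[[x,y]][[z]]`. -/
abbrev S3 : Type := PowerSeries R2

def xx : R2 := MvPowerSeries.X 0
def yy : R2 := MvPowerSeries.X 1
def zz : S3 := PowerSeries.X
/-- The natural inclusion `ℂ[[x,y]] → ℂ[[x,y,z]]`. -/
def cc : R2 →+* S3 := PowerSeries.C (R := R2)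

/-- The ideal `((z−x)(z²−y), z²−y+2z(z−x))` of `ℂ[[x,y,z]]`, defining the fat contour
above a tangential intersection. -/
def IF : Ideal S3 :=
  Ideal.span {(zz - cc xx) * (zz ^ 2 - cc yy), zz ^ 2 - cc yy + 2 * zz * (zz - cc xx)}

/-- The ideal `(y(x²−y)²)` of `ℂ[[x,y]]`, defining the fat silhouette at a tangential
intersection. -/
def IE : Ideal R2 := Ideal.span {yy * (xx ^ 2 - yy) ^ 2}

namespace MvPowerSeries

theorem X_not_dvd_X_pow {σ R : Type*} [CommSemiring R] [Nontrivial R] {i j : σ} (hij : i ≠ j)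
    (n : ℕ) : ¬ (X i : MvPowerSeries σ R) ∣ X j ^ n := by
  classical
  rw [X_dvd_iff]
  push Not
  exact ⟨Finsupp.single j n, by simp [hij], by simp [coeff_X_pow]⟩

instance {σ R : Type*} [CommRing R] [IsDomain R] : IsDomain (MvPowerSeries σ R) :=
  NoZeroDivisors.to_isDomain _

variable {σ k : Type*} [Field k]

theorem irreducible_of_constantCoeff_eq_zero_of_coeff_single_ne_zero {f : MvPowerSeries σ k}
    (h0 : constantCoeff f = 0) {i : σ} (h1 : coeff (Finsupp.single i 1) f ≠ 0) :
    Irreducible f := by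
  have hle : f.order ≤ 1 := by simpa using order_le h1
  have one_le_order {a : MvPowerSeries σ k} (ha : ¬ IsUnit a) : 1 ≤ a.order := by
    rwa [one_le_order_iff_constCoeff_eq_zero, ← not_ne_iff, ← isUnit_iff_ne_zero,
      ← isUnit_iff_constantCoeff]
  refine irreducible_iff.mpr ⟨by simp [isUnit_iff_constantCoeff, h0], fun a b hab => ?_⟩
  by_contra! hne
  have : (2 : ℕ∞) ≤ 1 := calc
    (2 : ℕ∞) = 1 + 1 := by norm_num
    _ ≤ a.order + b.order := add_le_add (one_le_order hne.1) (one_le_order hne.2)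
    _ ≤ (a * b).order := le_order_mul
    _ ≤ 1 := hab ▸ hle
  exact absurd this (by norm_num)

instance : IsPrincipalIdealRing (MvPowerSeries (Fin 1) k) :=
  IsPrincipalIdealRing.of_surjective (renameEquiv k (Equiv.equivPUnit (Fin 1))).symm
    (renameEquiv k _).symm.surjective

instance : UniqueFactorizationMonoid (MvPowerSeries (Fin 2) k) :=
  (finSuccEquiv k 1).symm.toMulEquiv.uniqueFactorizationMonoid inferInstance

end MvPowerSeries

theorem Ideal.Quotient.mk_mem_nonZeroDivisors_of_prime {R : Type*} [CommRing R] [IsDomain R]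
    {p f : R} (hp : Prime p) (hpf : ¬ p ∣ f) :
    Ideal.Quotient.mk (Ideal.span {f}) p ∈ nonZeroDivisors (R ⧸ Ideal.span {f}) := by
  rw [mem_nonZeroDivisors_iff_right]
  intro u hu
  obtain ⟨g, rfl⟩ := Ideal.Quotient.mk_surjective u
  rw [← map_mul, Ideal.Quotient.eq_zero_iff_mem, Ideal.mem_span_singleton] at hu
  rw [Ideal.Quotient.eq_zero_iff_mem, Ideal.mem_span_singleton]
  obtain ⟨q, hq⟩ := hu
  obtain ⟨q', rfl⟩ := (hp.dvd_or_dvd ⟨g, by rw [← hq, mul_comm]⟩).resolve_left hpf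
  exact ⟨q', mul_right_cancel₀ hp.ne_zero (by rw [hq]; ring)⟩

open MvPowerSeries

theorem irreducible_yy : Irreducible yy :=
  irreducible_of_constantCoeff_eq_zero_of_coeff_single_ne_zero (i := 1) (by simp [yy])
    (by simp [yy, coeff_X])

theorem irreducible_xx_sq_sub_yy : Irreducible (xx ^ 2 - yy) :=
  irreducible_of_constantCoeff_eq_zero_of_coeff_single_ne_zero (i := 1) (by simp [xx, yy])
    (by simp [xx, yy, coeff_X, coeff_X_pow, Finsupp.single_eq_single_iff])

theorem irreducible_three_yy_add_xx_sq : Irreducible (3 * yy + xx ^ 2) := by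
  refine irreducible_of_constantCoeff_eq_zero_of_coeff_single_ne_zero (i := 1) (by simp [xx, yy]) ?_
  rw [← map_ofNat C 3]
  simp [xx, yy, coeff_X, coeff_X_pow, Finsupp.single_eq_single_iff]

theorem three_yy_add_xx_sq_not_dvd : ¬ 3 * yy + xx ^ 2 ∣ yy * (xx ^ 2 - yy) ^ 2 := by
  have hy : ¬ yy ∣ xx ^ 2 := X_not_dvd_X_pow (by decide) 2
  have hg := irreducible_three_yy_add_xx_sq
  intro h
  rcases hg.prime.dvd_or_dvd h with h | h
  · exact hy ((dvd_add_right (dvd_mul_left yy 3)).mp (hg.dvd_symm irreducible_yy h))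
  · have h4 : xx ^ 2 - yy ∣ 4 * yy := by
      have := hg.dvd_symm irreducible_xx_sq_sub_yy (hg.prime.dvd_of_dvd_pow h)
      convert dvd_sub this (dvd_refl (xx ^ 2 - yy)) using 1
      ring
    have four_isUnit : IsUnit (4 : R2) :=
      isUnit_iff_constantCoeff.mpr (by rw [map_ofNat]; norm_num)
    exact hy ((dvd_sub_left (dvd_refl yy)).mp
      (irreducible_xx_sq_sub_yy.dvd_symm irreducible_yy (four_isUnit.dvd_mul_left.mp h4)))

theorem zz_mul_cc_sub_mem_IF : zz * cc (3 * yy + xx ^ 2) - cc (4 * (xx * yy)) ∈ IF := by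
  have h2 : IsUnit (2 : S3) := by
    simpa only [map_ofNat] using (IsUnit.mk0 (2 : ℂ) two_ne_zero).map (algebraMap ℂ S3)
  refine (Ideal.unit_mul_mem_iff_mem IF h2).mp (Ideal.mem_span_pair.mpr ⟨-9, 3 * zz - cc xx, ?_⟩)
  simp only [map_add, map_mul, map_pow, map_ofNat]
  ring

/-- In `F = ℂ[[x,y,z]]/((z−x)(z²−y), z²−y+2z(z−x))` the identity `[z]·[3y+x²] = [4xy]`
holds, and `3y + x²` is a non-zerodivisor in `E = ℂ[[x,y]]/(y(x²−y)²)` (so `[3y+x²]`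
comes from a non-zerodivisor of `E` under the inclusion `E → F`). -/
theorem stmt_19 :
    Ideal.Quotient.mk IF zz * Ideal.Quotient.mk IF (cc (3 * yy + xx ^ 2)) =
        Ideal.Quotient.mk IF (cc (4 * (xx * yy))) ∧
      Ideal.Quotient.mk IE (3 * yy + xx ^ 2) ∈ nonZeroDivisors (R2 ⧸ IE) := by
  refine ⟨?_, Ideal.Quotient.mk_mem_nonZeroDivisors_of_prime
    irreducible_three_yy_add_xx_sq.prime three_yy_add_xx_sq_not_dvd⟩
  rw [← map_mul, Ideal.Quotient.mk_eq_mk_iff_sub_mem]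
  exact zz_mul_cc_sub_mem_IF

end
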